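/- For a nontrivial graph G of order n, η(G) + η(Ḡ) = 2n − 1 if and only if G is isomorphic to the complete graph K_n or to its complement, the edgeless graph on n vertices. -/
import Mathlib


open SimpleGraph

/-- `S` is a locating set of `G`: every vertex outside `S` is at finite distance from
some vertex of `S`, and any two distinct vertices have distinct vectors of distances
to `S`. -/
def IsLocatingSet {V : Type*} (G : SimpleGraph V) (S : Set V) : Prop :=
  (∀ v ∉ S, ∃ x ∈ S, G.edist v x ≠ ⊤) ∧
  ∀ u v : V, u ≠ v → ∃ x ∈ S, G.edist u x ≠ G.edist v x

/-- The location number (metric dimension) `β(G)`: the minimum cardinality of a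
locating set of `G`. -/
noncomputable def locNum {V : Type*} [Fintype V] (G : SimpleGraph V) : ℕ :=
  sInf {k | ∃ S : Set V, IsLocatingSet G S ∧ S.ncard = k}

/-- `D` is a dominating set of `G`. -/
def IsDominatingSet {V : Type*} (G : SimpleGraph V) (D : Set V) : Prop :=
  ∀ v ∉ D, ∃ u ∈ D, G.Adj v u

/-- The metric-location-domination number `η(G)`: the minimum cardinality of a set
that is both dominating and locating. -/
noncomputable def mldNum {V : Type*} [Fintype V] (G : SimpleGraph V) : ℕ :=
  sInf {k | ∃ D : Set V, IsDominatingSet G D ∧ IsLocatingSet G D ∧ D.ncard = k}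

section Aux

variable {V : Type*} [Fintype V] (G : SimpleGraph V)

lemma isLocatingSet_univ : IsLocatingSet G Set.univ := by
  refine ⟨fun v hv => absurd (Set.mem_univ v) hv, fun u v huv => ?_⟩
  refine ⟨u, Set.mem_univ u, ?_⟩
  rw [SimpleGraph.edist_self]
  exact fun h => huv ((SimpleGraph.edist_eq_zero_iff.mp h.symm).symm)

lemma ncard_univ' : (Set.univ : Set V).ncard = Fintype.card V := by
  rw [Set.ncard_univ, Nat.card_eq_fintype_card]

lemma mldNum_mem_univ :
    Fintype.card V ∈ {k | ∃ D : Set V, IsDominatingSet G D ∧ IsLocatingSet G D ∧ D.ncard = k} :=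
  ⟨Set.univ, fun v hv => absurd (Set.mem_univ v) hv, isLocatingSet_univ G, ncard_univ'⟩

lemma mldNum_set_nonempty :
    {k | ∃ D : Set V, IsDominatingSet G D ∧ IsLocatingSet G D ∧ D.ncard = k}.Nonempty :=
  ⟨Fintype.card V, mldNum_mem_univ G⟩

lemma mldNum_le_card : mldNum G ≤ Fintype.card V :=
  Nat.sInf_le (mldNum_mem_univ G)

lemma ncard_compl_singleton (a : V) : ({a}ᶜ : Set V).ncard = Fintype.card V - 1 := by
  have h1 := Set.ncard_add_ncard_compl ({a} : Set V)
  rw [Set.ncard_singleton, Nat.card_eq_fintype_card] at h1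
  omega

lemma mldNum_le_of_adj {a b : V} (h : G.Adj a b) :
    mldNum G ≤ Fintype.card V - 1 := by
  apply Nat.sInf_le
  refine ⟨{a}ᶜ, ?_, ⟨?_, ?_⟩, ncard_compl_singleton a⟩
  · intro v hv
    simp only [Set.mem_compl_iff, Set.mem_singleton_iff, not_not] at hv
    subst hv
    exact ⟨b, by simp [h.ne'], h⟩
  · intro v hv
    simp only [Set.mem_compl_iff, Set.mem_singleton_iff, not_not] at hv
    subst hv
    refine ⟨b, by simp [h.ne'], ?_⟩
    rw [SimpleGraph.edist_eq_one_iff_adj.mpr h]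
    simp
  · intro u v huv
    rcases eq_or_ne u a with rfl | hu
    · refine ⟨v, by simp [huv.symm], ?_⟩
      rw [SimpleGraph.edist_self]
      exact fun h0 => huv (SimpleGraph.edist_eq_zero_iff.mp h0)
    · refine ⟨u, by simp [hu], ?_⟩
      rw [SimpleGraph.edist_self]
      exact fun h0 => huv ((SimpleGraph.edist_eq_zero_iff.mp h0.symm).symm)

lemma mldNum_bot : mldNum (⊥ : SimpleGraph V) = Fintype.card V := by
  obtain ⟨D, hdom, -, hcard⟩ :
      ∃ D : Set V, IsDominatingSet ⊥ D ∧ IsLocatingSet ⊥ D ∧ D.ncard = mldNum (⊥ : SimpleGraph V) :=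
    Nat.sInf_mem (mldNum_set_nonempty (⊥ : SimpleGraph V))
  have hD : D = Set.univ := by
    rw [Set.eq_univ_iff_forall]
    intro v
    by_contra hv
    obtain ⟨u, -, hadj⟩ := hdom v hv
    exact hadj
  rw [← hcard, hD, Set.ncard_univ, Nat.card_eq_fintype_card]

lemma mldNum_top (hn : 2 ≤ Fintype.card V) :
    mldNum (⊤ : SimpleGraph V) = Fintype.card V - 1 := by
  obtain ⟨a, b, hab⟩ := Fintype.exists_pair_of_one_lt_card (α := V) (by omega)
  refine le_antisymm (mldNum_le_of_adj _ (by simp [hab] : (⊤ : SimpleGraph V).Adj a b)) ?_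
  obtain ⟨D, -, ⟨-, hloc⟩, hcard⟩ :
      ∃ D : Set V, IsDominatingSet ⊤ D ∧ IsLocatingSet ⊤ D ∧ D.ncard = mldNum (⊤ : SimpleGraph V) :=
    Nat.sInf_mem (mldNum_set_nonempty (⊤ : SimpleGraph V))
  rw [← hcard]
  by_contra hlt
  push_neg at hlt
  have h1 := Set.ncard_add_ncard_compl D
  rw [Nat.card_eq_fintype_card] at h1
  have h2 : 1 < (Dᶜ).ncard := by omega
  obtain ⟨u, v, hu, hv, huv⟩ := (Set.one_lt_ncard_iff (Set.toFinite _)).mp h2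
  obtain ⟨x, hx, hne⟩ := hloc u v huv
  apply hne
  have hux : u ≠ x := fun h => hu (h ▸ hx)
  have hvx : v ≠ x := fun h => hv (h ▸ hx)
  rw [SimpleGraph.edist_eq_one_iff_adj.mpr (by simp [hux]),
    SimpleGraph.edist_eq_one_iff_adj.mpr (by simp [hvx])]

lemma eq_bot_of_mldNum_eq_card (hn : 2 ≤ Fintype.card V)
    (h : mldNum G = Fintype.card V) : G = ⊥ := by
  by_contra hne
  have : ∃ a b, G.Adj a b := by
    by_contra h'
    push_neg at h'
    exact hne (by ext a b; simp [h' a b])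
  obtain ⟨a, b, hab⟩ := this
  have := mldNum_le_of_adj G hab
  omega

end Aux

/-- For a nontrivial graph `G` of order `n`, `η(G) + η(Ḡ) = 2n - 1` iff `G` is complete
or edgeless. -/
theorem mldNum_sum_eq_max_iff {V : Type*} [Fintype V] (G : SimpleGraph V)
    (hn : 2 ≤ Fintype.card V) :
    mldNum G + mldNum Gᶜ = 2 * Fintype.card V - 1 ↔
      Nonempty (G ≃g (⊤ : SimpleGraph (Fin (Fintype.card V)))) ∨
      Nonempty (G ≃g (⊥ : SimpleGraph (Fin (Fintype.card V)))) := by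
  set n := Fintype.card V with hN
  have e : V ≃ Fin n := Fintype.equivFin V
  constructor
  · intro h
    have h1 := mldNum_le_card G
    have h2 := mldNum_le_card Gᶜ
    have : mldNum G = n ∨ mldNum Gᶜ = n := by omega
    rcases this with hG | hGc
    · have hbot : G = ⊥ := eq_bot_of_mldNum_eq_card G hn hG
      subst hbot
      exact Or.inr ⟨⟨e, by simp⟩⟩
    · have hbot : Gᶜ = ⊥ := eq_bot_of_mldNum_eq_card Gᶜ hn hGc
      have htop : G = ⊤ := by
        rwa [compl_eq_bot] at hbot
      subst htop
      exact Or.inl ⟨⟨e, by simp [e.apply_eq_iff_eq]⟩⟩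
  · intro h
    obtain hf | hf := h <;> obtain ⟨f⟩ := hf
    · have htop : G = ⊤ := by
        ext a b
        rw [← f.map_rel_iff]
        simp [f.toEquiv.apply_eq_iff_eq]
      subst htop
      rw [compl_top, mldNum_top hn, mldNum_bot]
      omega
    · have hbot : G = ⊥ := by
        ext a b
        rw [← f.map_rel_iff]
        simp
      subst hbot
      rw [compl_bot, mldNum_top hn, mldNum_bot]
      omega
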